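/- arXiv:2105.06767 — 5 statements merged into one kernel-verified Lean document; each statement's English description precedes it below -/
import Mathlib

section
/- Let X be a compact metrizable space, K ⊆ X × X a closed equivalence relation, and A, B ⊆ X disjoint sets that are both topologically closed and K-saturated (unions of K-equivalence classes). Then there exist disjoint open K-saturated sets U, V with A ⊆ U and B ⊆ V. -/
theorem stmt_2 {X : Type*} [MetricSpace X] [CompactSpace X] (K : Setoid X)
    (hK : IsClosed {p : X × X | K.r p.1 p.2})
    (A B : Set X) (hA : IsClosed A) (hB : IsClosed B) (hAB : Disjoint A B)
    (hAs : ∀ x ∈ A, ∀ y, K.r x y → y ∈ A)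
    (hBs : ∀ x ∈ B, ∀ y, K.r x y → y ∈ B) :
    ∃ U V : Set X, IsOpen U ∧ IsOpen V ∧ Disjoint U V ∧ A ⊆ U ∧ B ⊆ V ∧
      (∀ x ∈ U, ∀ y, K.r x y → y ∈ U) ∧ (∀ x ∈ V, ∀ y, K.r x y → y ∈ V) := by
  -- saturation of a set
  set sat : Set X → Set X := fun S => {y | ∃ x ∈ S, K.r x y} with hsat
  have satClosed : ∀ C : Set X, IsClosed C → IsClosed (sat C) := by
    intro C hC
    have himg : sat C = Prod.snd '' ({p : X × X | K.r p.1 p.2} ∩ C ×ˢ Set.univ) := by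
      ext y
      constructor
      · rintro ⟨x, hx, hxy⟩
        exact ⟨(x, y), ⟨hxy, hx, trivial⟩, rfl⟩
      · rintro ⟨⟨x, y'⟩, ⟨hxy, hx, -⟩, rfl⟩
        exact ⟨x, hx, hxy⟩
    rw [himg]
    have hcpt : IsCompact ({p : X × X | K.r p.1 p.2} ∩ C ×ˢ Set.univ) :=
      (hK.inter (hC.prod isClosed_univ)).isCompact
    exact (hcpt.image continuous_snd).isClosed
  obtain ⟨U₀, V₀, hU₀, hV₀, hAU₀, hBV₀, hUV₀⟩ :=
    NormalSpace.normal A B hA hB hAB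
  refine ⟨(sat U₀ᶜ)ᶜ, (sat V₀ᶜ)ᶜ, (satClosed _ hU₀.isClosed_compl).isOpen_compl,
    (satClosed _ hV₀.isClosed_compl).isOpen_compl, ?_, ?_, ?_, ?_, ?_⟩
  · -- disjoint: each is contained in U₀ / V₀
    have h1 : (sat U₀ᶜ)ᶜ ⊆ U₀ := by
      intro x hx
      by_contra hxU
      exact hx ⟨x, hxU, K.refl x⟩
    have h2 : (sat V₀ᶜ)ᶜ ⊆ V₀ := by
      intro x hx
      by_contra hxV
      exact hx ⟨x, hxV, K.refl x⟩
    exact hUV₀.mono h1 h2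
  · intro a ha hsa
    obtain ⟨z, hz, hza⟩ := hsa
    exact hz (hAU₀ (hAs a ha z (K.symm hza)))
  · intro b hb hsb
    obtain ⟨z, hz, hzb⟩ := hsb
    exact hz (hBV₀ (hBs b hb z (K.symm hzb)))
  · intro x hx y hxy hy
    obtain ⟨z, hz, hzy⟩ := hy
    exact hx ⟨z, hz, K.trans hzy (K.symm hxy)⟩
  · intro x hx y hxy hy
    obtain ⟨z, hz, hzy⟩ := hy
    exact hx ⟨z, hz, K.trans hzy (K.symm hxy)⟩
end

section
/- Let (Gᵢ, φᵢ) be a system of finite graphs (each Gᵢ has a self-loop at every vertex and φᵢ : G_{i+1} → Gᵢ is a graph homomorphism surjective on vertices), with graph distance dₙ in Gₙ, and let G* = { x ∈ Π Vᵢ | φᵢ(x_{i+1}) = xᵢ }. Then the following are equivalent: (1) there is an increasing function f : ℕ → ℕ with f(n) ≥ n such that for all n and all x, y ∈ G*, d_{f(n)}(x_{f(n)}, y_{f(n)}) ≥ 2·dₙ(xₙ, yₙ) − 1; (2) for all n there exists m such that for all x, y ∈ G*, d_m(x_m, y_m) ≤ 2 implies dₙ(xₙ, yₙ) ≤ 1.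 -/
/-- Path-distance (in `ℕ∞`) with respect to an edge relation `E`. -/
noncomputable def gDist {V : Type*} (E : V → V → Prop) (u v : V) : ℕ∞ :=
  sInf {k : ℕ∞ | ∃ n : ℕ, k = (n : ℕ∞) ∧
    ∃ p : ℕ → V, p 0 = u ∧ p n = v ∧ ∀ i < n, E (p i) (p (i + 1))}

section Aux

variable {V : ℕ → Type*} (φ : ∀ i, V (i + 1) → V i)

/-- Iterated backward projection. -/
def prj {i : ℕ} : ∀ {j : ℕ}, i ≤ j → V j → V i :=
  Nat.leRec (motive := fun j _ => V j → V i) id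
    (fun j _ ih v => ih (φ j v))

@[simp] lemma prj_refl {i : ℕ} (h : i ≤ i) (v : V i) : prj φ h v = v :=
  congrFun (Nat.leRec_self (motive := fun j _ => V j → V i) id
    (fun j _ ih v => ih (φ j v))) v

lemma prj_succ {i j : ℕ} (h : i ≤ j) (h2 : i ≤ j + 1) (v : V (j + 1)) :
    prj φ h2 v = prj φ h (φ j v) :=
  congrFun (Nat.leRec_succ (motive := fun j _ => V j → V i) id
    (fun j _ ih v => ih (φ j v)) h (h2 := h2)) v

lemma prj_comm {i j : ℕ} (h : i + 1 ≤ j) (v : V j) :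
    φ i (prj φ h v) = prj φ (Nat.le_of_succ_le h) v := by
  induction j, h using Nat.le_induction with
  | base =>
    rw [prj_refl, prj_succ φ le_rfl, prj_refl]
  | succ j h ih =>
    rw [prj_succ φ h, ih, prj_succ φ (Nat.le_of_succ_le h)]

lemma prj_hom {E : ∀ i, V i → V i → Prop}
    (hhom : ∀ i a b, E (i + 1) a b → E i (φ i a) (φ i b))
    {i j : ℕ} (h : i ≤ j) {a b : V j} (hab : E j a b) :
    E i (prj φ h a) (prj φ h b) := by
  induction j, h using Nat.le_induction with
  | base => rw [prj_refl, prj_refl]; exact hab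
  | succ j h ih =>
    rw [prj_succ φ h, prj_succ φ h]
    exact ih (hhom _ _ _ hab)

lemma chain_prj {x : ∀ i, V i} (hx : ∀ i, φ i (x (i + 1)) = x i)
    {n m : ℕ} (h : n ≤ m) : x n = prj φ h (x m) := by
  induction m, h using Nat.le_induction with
  | base => rw [prj_refl]
  | succ m h ih => rw [prj_succ φ h, hx, ih]

/-- Lift a vertex upward using a section. -/
def liftUp (s : ∀ i, V i → V (i + 1)) (m : ℕ) (v : V m) : ∀ k, V (m + k)
  | 0 => v
  | k + 1 => s (m + k) (liftUp s m v k)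

lemma exists_chain_extension (hsurj : ∀ i, Function.Surjective (φ i))
    (m : ℕ) (v : V m) :
    ∃ x : ∀ i, V i, (∀ i, φ i (x (i + 1)) = x i) ∧ x m = v := by
  classical
  set s : ∀ i, V i → V (i + 1) := fun i => Function.surjInv (hsurj i) with hs
  have hsec : ∀ i w, φ i (s i w) = w := fun i w => Function.surjInv_eq (hsurj i) w
  refine ⟨fun i => prj φ (Nat.le_add_left i m) (liftUp s m v i), ?_, ?_⟩
  · intro i
    rw [prj_comm φ]
    show prj φ _ (s (m + i) (liftUp s m v i)) = _
    rw [prj_succ φ (Nat.le_add_left i m), hsec]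
  · have key : ∀ k (h : m ≤ m + k), prj φ h (liftUp s m v k) = v := by
      intro k
      induction k with
      | zero => intro h; exact prj_refl φ h v
      | succ k ih =>
        intro h
        show prj φ h (s (m + k) (liftUp s m v k)) = v
        rw [prj_succ φ (Nat.le_add_right m k), hsec, ih]
    exact key m _

end Aux

section GDist

variable {V : Type*} {E : V → V → Prop}

lemma gDist_le_of_path {u v : V} (n : ℕ) (p : ℕ → V)
    (h0 : p 0 = u) (hn : p n = v) (he : ∀ i < n, E (p i) (p (i + 1))) :
    gDist E u v ≤ (n : ℕ∞) :=
  sInf_le ⟨n, rfl, p, h0, hn, he⟩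

lemma gDist_le_iff (hrefl : ∀ v, E v v) {u v : V} (k : ℕ) :
    gDist E u v ≤ (k : ℕ∞) ↔
      ∃ p : ℕ → V, p 0 = u ∧ p k = v ∧ ∀ i < k, E (p i) (p (i + 1)) := by
  constructor
  · intro h
    by_contra hno
    push_neg at hno
    -- every element of the set is ≥ k+1 would contradict; first get some path of length n ≤ k
    have : ∃ n : ℕ, n ≤ k ∧ ∃ p : ℕ → V, p 0 = u ∧ p n = v ∧ ∀ i < n, E (p i) (p (i + 1)) := by
      by_contra hc
      push_neg at hc
      have hge : ((k : ℕ∞) + 1) ≤ gDist E u v := by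
        apply le_sInf
        rintro a ⟨n, rfl, p, h0, hn, he⟩
        by_cases hnk : n ≤ k
        · obtain ⟨i, hi, hbad⟩ := hc n hnk p h0 hn
          exact absurd (he i hi) hbad
        · exact_mod_cast Nat.succ_le_of_lt (lt_of_not_ge hnk)
      have := hge.trans h
      norm_cast at this
      omega
    obtain ⟨n, hnk, p, h0, hn, he⟩ := this
    obtain ⟨i, hi, hbad⟩ := hno (fun i => p (min i n)) (by simp [h0])
      (by simp [Nat.min_eq_right hnk, hn])
    apply hbad
    rcases lt_or_ge i n with h' | h'
    · simp only [Nat.min_eq_left (Nat.le_of_lt h'), Nat.min_eq_left h']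
      exact he i h'
    · simp only [Nat.min_eq_right h', Nat.min_eq_right (le_trans h' (Nat.le_succ i))]
      exact hrefl _
  · rintro ⟨p, h0, hn, he⟩
    exact gDist_le_of_path k p h0 hn he

lemma gDist_le_one_iff (hrefl : ∀ v, E v v) {u v : V} :
    gDist E u v ≤ 1 ↔ E u v := by
  rw [show (1 : ℕ∞) = ((1 : ℕ) : ℕ∞) by norm_cast, gDist_le_iff hrefl]
  constructor
  · rintro ⟨p, h0, h1, he⟩
    have := he 0 Nat.one_pos
    rwa [h0, h1] at this
  · intro h
    refine ⟨fun i => if i = 0 then u else v, by simp, by simp, ?_⟩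
    intro i hi
    interval_cases i
    simpa using h

lemma gDist_hom {V' : Type*} {E' : V' → V' → Prop} (ψ : V → V')
    (hψ : ∀ a b, E a b → E' (ψ a) (ψ b)) (u v : V) :
    gDist E' (ψ u) (ψ v) ≤ gDist E u v := by
  apply sInf_le_sInf
  rintro a ⟨n, rfl, p, h0, hn, he⟩
  exact ⟨n, rfl, fun i => ψ (p i), by dsimp only; rw [h0], by dsimp only; rw [hn],
    fun i hi => hψ _ _ (he i hi)⟩

end GDist


theorem stmt_10 (V : ℕ → Type*) [∀ i, Fintype (V i)]
    (E : ∀ i, V i → V i → Prop)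
    (hrefl : ∀ i v, E i v v) (hsymm : ∀ i u v, E i u v → E i v u)
    (φ : ∀ i, V (i + 1) → V i)
    (hhom : ∀ i a b, E (i + 1) a b → E i (φ i a) (φ i b))
    (hsurj : ∀ i, Function.Surjective (φ i)) :
    (∃ f : ℕ → ℕ, Monotone f ∧ (∀ n, n ≤ f n) ∧
      ∀ (n : ℕ) (x y : ∀ i, V i),
        (∀ i, φ i (x (i + 1)) = x i) → (∀ i, φ i (y (i + 1)) = y i) →
        2 * gDist (E n) (x n) (y n) - 1 ≤ gDist (E (f n)) (x (f n)) (y (f n))) ↔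
    (∀ n : ℕ, ∃ m : ℕ,
      ∀ x y : ∀ i, V i,
        (∀ i, φ i (x (i + 1)) = x i) → (∀ i, φ i (y (i + 1)) = y i) →
        gDist (E m) (x m) (y m) ≤ 2 → gDist (E n) (x n) (y n) ≤ 1) := by
  have hmono : ∀ (x y : ∀ i, V i), (∀ i, φ i (x (i + 1)) = x i) →
      (∀ i, φ i (y (i + 1)) = y i) → ∀ {n m : ℕ}, n ≤ m →
      gDist (E n) (x n) (y n) ≤ gDist (E m) (x m) (y m) := by
    intro x y hx hy n m h
    rw [chain_prj φ hx h, chain_prj φ hy h]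
    exact gDist_hom _ (fun a b hab => prj_hom φ hhom h hab) _ _
  constructor
  · rintro ⟨f, hfm, hfn, hf⟩ n
    refine ⟨f n, fun x y hx hy h2 => ?_⟩
    have h1 := (hf n x y hx hy).trans h2
    have hfin : gDist (E n) (x n) (y n) ≤ 2 :=
      le_trans (hmono x y hx hy (hfn n)) h2
    have hne : gDist (E n) (x n) (y n) ≠ ⊤ := by
      intro ht
      rw [ht] at hfin
      exact absurd hfin (by simp)
    lift gDist (E n) (x n) (y n) to ℕ using hne with k hk
    have hk1 : 2 * k - 1 ≤ 2 := by exact_mod_cast h1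
    have : k ≤ 1 := by omega
    exact_mod_cast this
  · intro h2
    have key : ∀ n m : ℕ, n ≤ m →
        (∀ x y : ∀ i, V i, (∀ i, φ i (x (i + 1)) = x i) →
          (∀ i, φ i (y (i + 1)) = y i) →
          gDist (E m) (x m) (y m) ≤ 2 → gDist (E n) (x n) (y n) ≤ 1) →
        ∀ x y : ∀ i, V i, (∀ i, φ i (x (i + 1)) = x i) →
          (∀ i, φ i (y (i + 1)) = y i) →
          2 * gDist (E n) (x n) (y n) - 1 ≤ gDist (E m) (x m) (y m) := by
      intro n m hnm H x y hx hy
      rcases eq_top_or_lt_top (gDist (E m) (x m) (y m)) with htop | hlt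
      · rw [htop]; exact le_top
      lift gDist (E m) (x m) (y m) to ℕ using hlt.ne with L hL
      obtain ⟨p, hp0, hpL, hpe⟩ := (gDist_le_iff (hrefl m) L).mp hL.ge
      set c := (L + 1) / 2 with hc
      have hq : gDist (E n) (x n) (y n) ≤ (c : ℕ∞) := by
        rw [gDist_le_iff (hrefl n)]
        refine ⟨fun j => prj φ hnm (p (min (2 * j) L)), ?_, ?_, ?_⟩
        · dsimp only
          rw [Nat.mul_zero, Nat.min_eq_left (Nat.zero_le L), hp0, ← chain_prj φ hx hnm]
        · dsimp only
          rw [Nat.min_eq_right (by omega), hpL, ← chain_prj φ hy hnm]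
        · intro j hj
          obtain ⟨z, hz, hzm⟩ := exists_chain_extension φ hsurj m (p (min (2 * j) L))
          obtain ⟨z', hz', hzm'⟩ :=
            exists_chain_extension φ hsurj m (p (min (2 * j + 2) L))
          have hd2 : gDist (E m) (z m) (z' m) ≤ ((2 : ℕ) : ℕ∞) := by
            rw [gDist_le_iff (hrefl m)]
            refine ⟨fun t => p (min (2 * j + t) L), ?_, ?_, ?_⟩
            · dsimp only; rw [Nat.add_zero, hzm]
            · dsimp only; rw [hzm']
            · intro t ht
              dsimp only
              rcases lt_or_ge (2 * j + t) L with h' | h'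
              · simp only [show min (2 * j + t) L = 2 * j + t from by omega,
                  show min (2 * j + (t + 1)) L = 2 * j + t + 1 from by omega]
                exact hpe _ h'
              · simp only [show min (2 * j + t) L = L from by omega,
                  show min (2 * j + (t + 1)) L = L from by omega]
                exact hrefl _ _
          have h1 := H z z' hz hz' (by exact_mod_cast hd2)
          have hE : E n (z n) (z' n) := (gDist_le_one_iff (hrefl n)).mp h1
          rw [chain_prj φ hz hnm, chain_prj φ hz' hnm, hzm, hzm'] at hE
          dsimp only
          have h22 : 2 * (j + 1) = 2 * j + 2 := by ring
          rw [h22]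
          exact hE
      calc 2 * gDist (E n) (x n) (y n) - 1 ≤ 2 * (c : ℕ∞) - 1 :=
            tsub_le_tsub_right (mul_le_mul_right hq 2) 1
        _ ≤ (L : ℕ∞) := by
            have hcL : 2 * c - 1 ≤ L := by rw [hc]; omega
            exact_mod_cast hcL
    choose m₀ hm₀ using h2
    refine ⟨fun n => (Finset.range (n + 1)).sup (fun k => max k (m₀ k)), ?_, ?_, ?_⟩
    · intro a b hab
      exact Finset.sup_mono (Finset.range_subset_range.mpr (by omega))
    · intro n
      exact le_trans (le_max_left _ _)
        (Finset.le_sup (f := fun k => max k (m₀ k)) (Finset.mem_range.mpr (by omega)))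
    · intro n x y hx hy
      have hmem : n ∈ Finset.range (n + 1) := Finset.mem_range.mpr (by omega)
      have hnM : n ≤ (Finset.range (n + 1)).sup (fun k => max k (m₀ k)) :=
        le_trans (le_max_left _ _) (Finset.le_sup (f := fun k => max k (m₀ k)) hmem)
      have hmM : m₀ n ≤ (Finset.range (n + 1)).sup (fun k => max k (m₀ k)) :=
        le_trans (le_max_right _ _) (Finset.le_sup (f := fun k => max k (m₀ k)) hmem)
      exact key n _ hnM
        (fun z z' hz hz' hd => hm₀ n z z' hz hz'
          (le_trans (hmono z z' hz hz' hmM) hd)) x y hx hy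
end

section
/- Let Σᵢ be finite alphabets, C ⊆ Π_{i∈ℕ} Σᵢ a closed set, and R ⊆ C × C a closed equivalence relation. For each n, define the graph Gₙ whose vertices are the words u of length n that are prefixes of elements of C, with an edge between u and v iff there exist x ∈ C extending u and y ∈ C extending v with (x, y) ∈ R. Then this system of graphs (with the prefix-restriction maps) is prehyperbolic: for all n there exists m such that whenever the distance in G_m between length-m prefixes of two points of C is at most 2, the distance in Gₙ between their length-n prefixes is at most 1. -/
open Filter Topology


private lemma gDist_le_one_of_edge {V : Type*} (E : V → V → Prop) {u v : V} (h : E u v) :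
    gDist E u v ≤ 1 := by
  apply sInf_le
  refine ⟨1, rfl, fun i => if i = 0 then u else v, by simp, by simp, ?_⟩
  intro i hi
  interval_cases i
  simpa using h

theorem stmt_11 (A : ℕ → Type*) [∀ i, Fintype (A i)]
    [∀ i, TopologicalSpace (A i)] [∀ i, DiscreteTopology (A i)]
    (C : Set (∀ i, A i)) (hC : IsClosed C)
    (R : Set ((∀ i, A i) × (∀ i, A i))) (hRC : R ⊆ C ×ˢ C) (hRcl : IsClosed R)
    (hrefl : ∀ x ∈ C, (x, x) ∈ R) (hsymm : ∀ x y, (x, y) ∈ R → (y, x) ∈ R)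
    (htrans : ∀ x y z, (x, y) ∈ R → (y, z) ∈ R → (x, z) ∈ R) :
    ∀ n : ℕ, ∃ m : ℕ,
      ∀ x y, x ∈ C → y ∈ C →
        gDist (fun u v : ∀ i : Fin m, A i =>
            ∃ x' ∈ C, ∃ y' ∈ C, (∀ i : Fin m, x' i.1 = u i) ∧ (∀ i : Fin m, y' i.1 = v i) ∧
              (x', y') ∈ R)
          (fun i : Fin m => x i.1) (fun i : Fin m => y i.1) ≤ 2 →
        gDist (fun u v : ∀ i : Fin n, A i =>
            ∃ x' ∈ C, ∃ y' ∈ C, (∀ i : Fin n, x' i.1 = u i) ∧ (∀ i : Fin n, y' i.1 = v i) ∧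
              (x', y') ∈ R)
          (fun i : Fin n => x i.1) (fun i : Fin n => y i.1) ≤ 1 := by
  intro n
  by_contra hcon
  push_neg at hcon
  choose x y hx hy hd hng using hcon
  -- extract, for each m, the four points witnessing a path of length ≤ 2
  have key : ∀ m, ∃ a b c d : (∀ i, A i), a ∈ C ∧ b ∈ C ∧ c ∈ C ∧ d ∈ C ∧
      (∀ i < m, a i = x m i) ∧ (∀ i < m, b i = c i) ∧ (∀ i < m, d i = y m i) ∧
      (a, b) ∈ R ∧ (c, d) ∈ R := by
    intro m
    have h3 : gDist (fun u v : ∀ i : Fin m, A i =>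
        ∃ x' ∈ C, ∃ y' ∈ C, (∀ i : Fin m, x' i.1 = u i) ∧ (∀ i : Fin m, y' i.1 = v i) ∧
          (x', y') ∈ R) (fun i : Fin m => x m i.1) (fun i : Fin m => y m i.1) < 3 :=
      lt_of_le_of_lt (hd m) (by norm_num)
    unfold gDist at h3
    obtain ⟨k', hk'S, hk'⟩ := sInf_lt_iff.mp h3
    obtain ⟨k, rfl, p, hp0, hpk, hpe⟩ := hk'S
    have hk : k < 3 := by exact_mod_cast hk'
    interval_cases k
    · -- path of length 0: prefixes equal
      have huv : (fun i : Fin m => x m i.1) = (fun i : Fin m => y m i.1) := by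
        rw [← hp0, ← hpk]
      refine ⟨x m, x m, x m, x m, hx m, hx m, hx m, hx m, fun i _ => rfl, fun i _ => rfl,
        ?_, hrefl _ (hx m), hrefl _ (hx m)⟩
      intro i hi
      exact congrFun huv ⟨i, hi⟩
    · -- one edge
      have e := hpe 0 (by norm_num)
      rw [hp0] at e
      rw [show (0 : ℕ) + 1 = 1 from rfl, hpk] at e
      obtain ⟨a, ha, b, hb, hau, hbv, hR⟩ := e
      exact ⟨a, b, b, b, ha, hb, hb, hb, fun i hi => hau ⟨i, hi⟩, fun i _ => rfl,
        fun i hi => hbv ⟨i, hi⟩, hR, hrefl _ hb⟩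
    · -- two edges
      have e1 := hpe 0 (by norm_num)
      have e2 := hpe 1 (by norm_num)
      rw [hp0] at e1
      rw [show (1 : ℕ) + 1 = 2 from rfl, hpk] at e2
      obtain ⟨a, ha, b, hb, hau, hbw, hR1⟩ := e1
      obtain ⟨c, hc, d, hdC, hcw, hdv, hR2⟩ := e2
      refine ⟨a, b, c, d, ha, hb, hc, hdC, fun i hi => hau ⟨i, hi⟩, ?_,
        fun i hi => hdv ⟨i, hi⟩, hR1, hR2⟩
      intro i hi
      rw [hbw ⟨i, hi⟩, hcw ⟨i, hi⟩]
  choose a b c d haC hbC hcC hdC hax hbc hdy hab hcd using key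
  -- an ultrafilter extending atTop on ℕ
  obtain ⟨U, hU⟩ := Ultrafilter.exists_le (atTop : Filter ℕ)
  -- ultrafilter limits exist by compactness
  have lim : ∀ f : ℕ → (∀ i, A i), ∃ z, Tendsto f (↑U) (𝓝 z) := by
    intro f
    obtain ⟨z, _, hz⟩ := isCompact_univ.ultrafilter_le_nhds (U.map f) (by simp)
    exact ⟨z, by rwa [Ultrafilter.coe_map] at hz⟩
  obtain ⟨za, hza⟩ := lim a
  obtain ⟨zb, hzb⟩ := lim b
  obtain ⟨zc, hzc⟩ := lim c
  obtain ⟨zd, hzd⟩ := lim d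
  obtain ⟨zx, hzx⟩ := lim x
  obtain ⟨zy, hzy⟩ := lim y
  -- coordinatewise eventual equality with the limit
  have coordlim : ∀ (f : ℕ → (∀ i, A i)) z, Tendsto f (↑U) (𝓝 z) →
      ∀ i, ∀ᶠ m in (↑U : Filter ℕ), f m i = z i := by
    intro f z hz i
    have h1 : Tendsto (fun m => f m i) (↑U) (𝓝 (z i)) := (tendsto_pi_nhds.mp hz) i
    have h2 : {z i} ∈ 𝓝 (z i) := by
      rw [nhds_discrete]
      exact mem_pure.mpr rfl
    exact h1 h2
  -- equality of limits of eventually-coordinatewise-equal sequences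
  have limeq : ∀ (f g : ℕ → (∀ i, A i)) zf zg, Tendsto f (↑U) (𝓝 zf) →
      Tendsto g (↑U) (𝓝 zg) → (∀ i, ∀ᶠ m in (↑U : Filter ℕ), f m i = g m i) → zf = zg := by
    intro f g zf zg hf hg hfg
    funext i
    obtain ⟨m, e1, e2, e3⟩ := ((coordlim f zf hf i).and ((coordlim g zg hg i).and (hfg i))).exists
    rw [← e1, e3, e2]
  -- eventual-coordinate agreement along U from agreement below m
  have evag : ∀ (f g : ℕ → (∀ i, A i)), (∀ m, ∀ i < m, f m i = g m i) →
      ∀ i, ∀ᶠ m in (↑U : Filter ℕ), f m i = g m i := by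
    intro f g h i
    exact ((eventually_gt_atTop i).mono (fun m hm => h m i hm)).filter_mono hU
  have hzax : za = zx := limeq a x za zx hza hzx (evag a x hax)
  have hzbc : zb = zc := limeq b c zb zc hzb hzc (evag b c hbc)
  have hzdy : zd = zy := limeq d y zd zy hzd hzy (evag d y hdy)
  -- membership in closed sets in the limit
  have hzxC : zx ∈ C := hC.mem_of_tendsto hzx (Filter.Eventually.of_forall hx)
  have hzyC : zy ∈ C := hC.mem_of_tendsto hzy (Filter.Eventually.of_forall hy)
  have hRab : (za, zb) ∈ R :=
    hRcl.mem_of_tendsto (hza.prodMk_nhds hzb) (Filter.Eventually.of_forall hab)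
  have hRcd : (zc, zd) ∈ R :=
    hRcl.mem_of_tendsto (hzc.prodMk_nhds hzd) (Filter.Eventually.of_forall hcd)
  have hRxy : (zx, zy) ∈ R := by
    apply htrans zx zb zy
    · rw [← hzax]; exact hRab
    · rw [← hzdy, hzbc]; exact hRcd
  -- pick a large index where prefixes of length n agree with the limits
  have hev : ∀ᶠ m in (↑U : Filter ℕ),
      (∀ i : Fin n, x m i.1 = zx i.1) ∧ (∀ i : Fin n, y m i.1 = zy i.1) := by
    refine Filter.Eventually.and ?_ ?_ <;> rw [eventually_all]
    · exact fun i => coordlim x zx hzx i.1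
    · exact fun i => coordlim y zy hzy i.1
  obtain ⟨m, h1, h2⟩ := hev.exists
  exact absurd (gDist_le_one_of_edge _
    ⟨zx, hzxC, zy, hzyC, fun i => (h1 i).symm, fun i => (h2 i).symm, hRxy⟩)
    (not_le.mpr (hng m))
end

section
/- Let X be a compact metric space and F : X → X an arbitrary (not necessarily continuous) self-map. Then there exists a minimal closed F-invariant equivalence relation R on X such that the induced map F_R on the quotient X/R is continuous; that is, the intersection of all closed F-invariant equivalence relations R' for which F_{R'} is continuous is itself such a relation. -/
/-!
Relations `r` with `GoodRel F r` are stable under arbitrary intersections, so their intersection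
is the minimal one. Only continuity of `F_r` needs an argument. A closed equivalence relation on a
compact Hausdorff space has a Hausdorff quotient: the quotient map is closed, so disjoint fibres,
being disjoint closed sets in a normal space, have disjoint saturated neighbourhoods. Hence the
compact quotient by an intersection of such relations `s i` embeds into `∏ i, X/s i`, and in these
coordinates `F_r` is the product of the continuous maps `F_{s i}`.
-/

/-- A closed `F`-invariant equivalence relation whose induced map on the quotient
is continuous. -/
def GoodRel {X : Type*} [TopologicalSpace X] (F : X → X) (r : X → X → Prop) : Prop :=
  Equivalence r ∧ IsClosed {p : X × X | r p.1 p.2} ∧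
    ∃ h : ∀ a b, r a b → r (F a) (F b), Continuous (Quot.map F h : Quot r → Quot r)

open Topology Function

section

variable {X : Type*} [TopologicalSpace X]

theorem IsClosedMap.t2Space_of_surjective [T4Space X] {Y : Type*} [TopologicalSpace Y] {f : X → Y}
    (hf : IsClosedMap f) (hcont : Continuous f) (hsurj : Surjective f) : T2Space Y := by
  have : T1Space Y := by
    refine ⟨fun y => ?_⟩
    obtain ⟨x, rfl⟩ := hsurj y
    simpa using hf _ (isClosed_singleton (x := x))
  refine t2Space_iff_disjoint_nhds.mpr fun a b hab => ?_
  change Disjoint (𝓝 a) (𝓝 b)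
  rw [← Filter.disjoint_comap_iff hsurj, hf.comap_nhds_eq hcont, hf.comap_nhds_eq hcont]
  exact disjoint_nhdsSet_nhdsSet (isClosed_singleton.preimage hcont)
    (isClosed_singleton.preimage hcont) ((Set.disjoint_singleton.mpr hab).preimage f)

theorem isClosedMap_quot_mk [CompactSpace X] {s : X → X → Prop} (hs : Equivalence s)
    (hcl : IsClosed {p : X × X | s p.1 p.2}) : IsClosedMap (Quot.mk s) := by
  intro C hC
  rw [← isQuotientMap_quot_mk.isClosed_preimage]
  have hsat : Quot.mk s ⁻¹' (Quot.mk s '' C) =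
      Prod.snd '' ({p | s p.1 p.2} ∩ Prod.fst ⁻¹' C) := by
    ext x
    simp [hs.quot_mk_eq_iff, and_comm]
  rw [hsat]
  exact isClosedMap_snd_of_compactSpace _ (hcl.inter (hC.preimage continuous_fst))

theorem t2Space_quot_of_isClosed [CompactSpace X] [T2Space X] {s : X → X → Prop}
    (hs : Equivalence s) (hcl : IsClosed {p : X × X | s p.1 p.2}) : T2Space (Quot s) :=
  (isClosedMap_quot_mk hs hcl).t2Space_of_surjective continuous_quot_mk Quot.mk_surjective

variable [CompactSpace X] {ι : Type*} {s : ι → X → X → Prop}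

theorem isEmbedding_quot_lift_pi [∀ i, T2Space (Quot (s i))] (hs : ∀ i, Equivalence (s i)) :
    IsEmbedding (Quot.lift (fun x i => Quot.mk (s i) x)
      (fun _ _ h => funext fun i => Quot.sound (h i)) :
        Quot (fun x y => ∀ i, s i x y) → ∀ i, Quot (s i)) := by
  refine (Continuous.isClosedEmbedding ?_ ?_).isEmbedding
  · exact continuous_quot_lift _ (continuous_pi fun i => continuous_quot_mk)
  · rintro ⟨x⟩ ⟨y⟩ hxy
    exact Quot.sound fun i => (hs i).quot_mk_eq_iff x y |>.mp (congrFun hxy i)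

theorem GoodRel.iInf [T2Space X] {F : X → X} (hs : ∀ i, GoodRel F (s i)) :
    GoodRel F fun x y => ∀ i, s i x y := by
  have hequiv : Equivalence fun x y => ∀ i, s i x y :=
    ⟨fun x i => (hs i).1.refl x, fun h i => (hs i).1.symm (h i),
      fun h₁ h₂ i => (hs i).1.trans (h₁ i) (h₂ i)⟩
  have hclosed : IsClosed {p : X × X | ∀ i, s i p.1 p.2} := by
    simpa only [Set.ofPred_forall] using isClosed_iInter fun i => (hs i).2.1
  have hinv : ∀ a b, (∀ i, s i a b) → ∀ i, s i (F a) (F b) :=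
    fun a b h i => (hs i).2.2.1 a b (h i)
  refine ⟨hequiv, hclosed, hinv, ?_⟩
  have := fun i => t2Space_quot_of_isClosed (hs i).1 (hs i).2.1
  rw [isQuotientMap_quot_mk.continuous_iff,
    (isEmbedding_quot_lift_pi fun i => (hs i).1).continuous_iff]
  -- coordinatewise, the composite is `F_{s i} ∘ Quot.mk (s i)` by definition
  exact continuous_pi fun i => (hs i).2.2.2.comp continuous_quot_mk

end

theorem stmt_13 {X : Type*} [MetricSpace X] [CompactSpace X] (F : X → X) :
    ∃ r : X → X → Prop, GoodRel F r ∧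
      (∀ r' : X → X → Prop, GoodRel F r' → ∀ x y, r x y → r' x y) ∧
      (∀ x y, (∀ r' : X → X → Prop, GoodRel F r' → r' x y) → r x y) :=
  ⟨fun x y => ∀ r' : {r' // GoodRel F r'}, r'.1 x y, GoodRel.iInf fun r' => r'.2,
    fun r' hr' _ _ h => h ⟨r', hr'⟩, fun _ _ h r' => h r'.1 r'.2⟩
end

section
/- Let β > 1 be real, A = {0, 1, …, ⌊β⌋}, and let real : S_β → [0,1] be real((xᵢ)) = Σ_{i≥0} xᵢ β^{-(i+1)} on the β-shift S_β. If s, t ∈ S_β are distinct sequences with real(s) = real(t), then {s, t} = {a₀…a_m 0^∞, a₀…a_{m-1}(a_m − 1) d*_β(1)} for some m ∈ ℕ with a_m ≠ 0, where d*_β(1) is the quasi-greedy expansion of 1. Conversely any such pair satisfies real(s) = real(t). -/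
/-- The β-transformation `x ↦ βx mod 1` on `[0,1]`. -/
noncomputable def Tbeta (β : ℝ) (x : ℝ) : ℝ := Int.fract (β * x)

/-- The greedy β-expansion of `x`: the `i`-th digit is `⌊β · T_β^i(x)⌋`. -/
noncomputable def dExp (β : ℝ) (x : ℝ) : ℕ → ℕ :=
  fun i => (⌊β * (Tbeta β)^[i] x⌋).toNat

/-- The β-shift: the closure (in the product topology on `ℕ → ℕ`) of the set of
greedy β-expansions of numbers in `[0,1)`. -/
noncomputable def betaShift (β : ℝ) : Set (ℕ → ℕ) :=
  closure {s : ℕ → ℕ | ∃ x : ℝ, 0 ≤ x ∧ x < 1 ∧ s = dExp β x}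

/-- The real value `Σ sᵢ β^{-(i+1)}` of a digit sequence. -/
noncomputable def realVal (β : ℝ) (s : ℕ → ℕ) : ℝ :=
  ∑' i : ℕ, (s i : ℝ) / β ^ (i + 1)

open Classical in
/-- The quasi-greedy β-expansion of `1`: if `d_β(1) = t₀…t_m 0^∞` is finite
(with `t_m ≠ 0`), it is `(t₀…t_{m-1}(t_m − 1))^∞`; otherwise it is `d_β(1)`. -/
noncomputable def dStar (β : ℝ) : ℕ → ℕ :=
  if h : ∃ m : ℕ, dExp β 1 m ≠ 0 ∧ ∀ k, m < k → dExp β 1 k = 0 then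
    fun i =>
      if i % (Classical.choose h + 1) = Classical.choose h then
        dExp β 1 (Classical.choose h) - 1
      else dExp β 1 (i % (Classical.choose h + 1))
  else dExp β 1

set_option linter.unusedSectionVars false

open Filter Topology Finset

section BB
variable {β : ℝ} (hβ : 1 < β)

lemma T_nonneg (x : ℝ) : 0 ≤ Tbeta β x := Int.fract_nonneg _
lemma T_lt_one (x : ℝ) : Tbeta β x < 1 := Int.fract_lt_one _

lemma iter_nonneg {x : ℝ} (hx : 0 ≤ x) : ∀ n, 0 ≤ (Tbeta β)^[n] x
  | 0 => hx
  | (n+1) => by rw [Function.iterate_succ_apply']; exact T_nonneg _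

lemma iter_le_one {x : ℝ} (hx : x ≤ 1) : ∀ n, (Tbeta β)^[n] x ≤ 1
  | 0 => hx
  | (n+1) => by rw [Function.iterate_succ_apply']; exact (T_lt_one _).le

include hβ

lemma digit_cast {x : ℝ} (hx : 0 ≤ x) (i : ℕ) :
    (dExp β x i : ℝ) = ⌊β * (Tbeta β)^[i] x⌋ := by
  have h0 : (0:ℤ) ≤ ⌊β * (Tbeta β)^[i] x⌋ := by
    apply Int.floor_nonneg.mpr
    exact mul_nonneg (by linarith) (iter_nonneg hx i)
  rw [dExp]
  exact_mod_cast congrArg (Int.cast : ℤ → ℝ) (Int.toNat_of_nonneg h0)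

lemma digit_step {x : ℝ} (hx : 0 ≤ x) (i : ℕ) :
    β * (Tbeta β)^[i] x = (dExp β x i : ℝ) + (Tbeta β)^[i+1] x := by
  rw [digit_cast hβ hx i, Function.iterate_succ_apply', Tbeta, Int.fract]
  ring

lemma digit_le {x : ℝ} (hx : 0 ≤ x) (hx1 : x ≤ 1) (i : ℕ) : (dExp β x i : ℝ) ≤ β := by
  rw [digit_cast hβ hx i]
  calc (⌊β * (Tbeta β)^[i] x⌋ : ℝ) ≤ β * (Tbeta β)^[i] x := Int.floor_le _
    _ ≤ β * 1 := by
        have h1 := iter_le_one (β := β) hx1 i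
        have h0 := iter_nonneg (β := β) hx i
        nlinarith
    _ = β := mul_one β

lemma telescope {x : ℝ} (hx : 0 ≤ x) (n : ℕ) :
    ∑ i ∈ range n, (dExp β x i : ℝ) / β ^ (i+1) = x - (Tbeta β)^[n] x / β ^ n := by
  have hβ0 : (0:ℝ) < β := by linarith
  induction n with
  | zero => simp
  | succ n ih =>
    rw [Finset.sum_range_succ, ih]
    have h := digit_step hβ hx n
    have hbn : (0:ℝ) < β ^ n := pow_pos hβ0 n
    have hbn1 : (0:ℝ) < β ^ (n+1) := pow_pos hβ0 (n+1)
    have : (dExp β x n : ℝ) = β * (Tbeta β)^[n] x - (Tbeta β)^[n+1] x := by linarith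
    rw [this]
    field_simp
    ring

lemma summable_bdd {D : ℕ → ℕ} (hD : ∀ i, (D i : ℝ) ≤ β) :
    Summable (fun i => (D i : ℝ) / β ^ (i+1)) := by
  have hβ0 : (0:ℝ) < β := by linarith
  apply Summable.of_nonneg_of_le (fun i => div_nonneg (Nat.cast_nonneg _) (pow_pos hβ0 _).le)
    (g := fun i => (D i : ℝ) / β ^ (i+1)) (f := fun i => (β⁻¹) ^ i)
  · intro i
    rw [div_le_iff₀ (pow_pos hβ0 _), inv_pow, inv_mul_eq_div, le_div_iff₀ (pow_pos hβ0 _)]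
    calc (D i : ℝ) * β ^ i ≤ β * β ^ i := by
          have := hD i; have : (0:ℝ) ≤ (β:ℝ)^i := (pow_pos hβ0 i).le; nlinarith [hD i]
      _ = β ^ (i+1) := by ring
  · exact summable_geometric_of_lt_one (by positivity) (inv_lt_one_of_one_lt₀ hβ)

lemma tail_tendsto {c : ℕ → ℝ} (h0 : ∀ n, 0 ≤ c n) (h1 : ∀ n, c n ≤ 1) :
    Tendsto (fun n => c n / β ^ n) atTop (𝓝 0) := by
  have hβ0 : (0:ℝ) < β := by linarith
  apply squeeze_zero (fun n => div_nonneg (h0 n) (pow_pos hβ0 _).le)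
    (g := fun n => (β⁻¹) ^ n)
  · intro n
    rw [inv_pow, div_le_iff₀ (pow_pos hβ0 _), inv_mul_eq_div, le_div_iff₀ (pow_pos hβ0 _)]
    nlinarith [pow_pos hβ0 n, h1 n, h0 n]
  · exact tendsto_pow_atTop_nhds_zero_of_lt_one (by positivity) (inv_lt_one_of_one_lt₀ hβ)

lemma realVal_eq_of_partial {D : ℕ → ℕ} {x : ℝ} (hsum : Summable (fun i => (D i : ℝ) / β ^ (i+1)))
    (h : Tendsto (fun n => ∑ i ∈ range n, (D i : ℝ) / β ^ (i+1)) atTop (𝓝 x)) :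
    realVal β D = x :=
  (hsum.hasSum_iff_tendsto_nat.mpr h).tsum_eq

lemma realVal_dExp {x : ℝ} (hx : 0 ≤ x) (hx1 : x ≤ 1) : realVal β (dExp β x) = x := by
  apply realVal_eq_of_partial hβ (summable_bdd hβ (digit_le hβ hx hx1))
  have hten : Tendsto (fun n => x - (Tbeta β)^[n] x / β ^ n) atTop (𝓝 (x - 0)) :=
    (tendsto_const_nhds).sub (tail_tendsto hβ (iter_nonneg hx) (iter_le_one hx1))
  rw [sub_zero] at hten
  exact hten.congr (fun n => (telescope hβ hx n).symm)

end BB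

section CC
variable {β : ℝ} (hβ : 1 < β)

/-- an element of the beta-shift agrees with a true expansion on any finite prefix -/
lemma closure_approx {u : ℕ → ℕ} (hu : u ∈ betaShift β) (n : ℕ) :
    ∃ x : ℝ, 0 ≤ x ∧ x < 1 ∧ ∀ i < n, u i = dExp β x i := by
  have hopen : IsOpen {v : ℕ → ℕ | ∀ i < n, v i = u i} := by
    have : {v : ℕ → ℕ | ∀ i < n, v i = u i} =
        ⋂ i ∈ Finset.range n, (fun v : ℕ → ℕ => v i) ⁻¹' {u i} := by
      ext v; simp [Finset.mem_range]
    rw [this]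
    exact isOpen_biInter_finset fun i _ =>
      (continuous_apply i).isOpen_preimage _ (isOpen_discrete _)
  obtain ⟨w, hw⟩ := mem_closure_iff.mp hu _ hopen (fun i _ => rfl)
  obtain ⟨hw1, x, hx0, hx1, rfl⟩ := hw
  exact ⟨x, hx0, hx1, fun i hi => (hw1 i hi).symm⟩

include hβ in
lemma mem_digit_le {u : ℕ → ℕ} (hu : u ∈ betaShift β) (i : ℕ) : (u i : ℝ) ≤ β := by
  obtain ⟨x, hx0, hx1, hag⟩ := closure_approx hu (i+1)
  rw [hag i (Nat.lt_succ_self i)]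
  exact digit_le hβ hx0 hx1.le i

include hβ in
lemma summable_mem {u : ℕ → ℕ} (hu : u ∈ betaShift β) :
    Summable (fun i => (u i : ℝ) / β ^ (i+1)) :=
  summable_bdd hβ (mem_digit_le hβ hu)

include hβ in
lemma realVal_le_one {u : ℕ → ℕ} (hu : u ∈ betaShift β) : realVal β u ≤ 1 := by
  have hβ0 : (0:ℝ) < β := by linarith
  apply Summable.tsum_le_of_sum_le (summable_mem hβ hu)
  intro F
  obtain rfl | hne := F.eq_empty_or_nonempty
  · simp
  obtain ⟨n, hn⟩ : ∃ n, ∀ i ∈ F, i < n := ⟨F.max' hne + 1, fun i hi =>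
    Nat.lt_succ_of_le (F.le_max' i hi)⟩
  obtain ⟨x, hx0, hx1, hag⟩ := closure_approx hu n
  calc ∑ i ∈ F, (u i : ℝ) / β ^ (i+1)
      ≤ ∑ i ∈ Finset.range n, (u i : ℝ) / β ^ (i+1) := by
        apply Finset.sum_le_sum_of_subset_of_nonneg
        · intro i hi; exact Finset.mem_range.mpr (hn i hi)
        · intro i _ _; positivity
    _ = ∑ i ∈ Finset.range n, (dExp β x i : ℝ) / β ^ (i+1) := by
        apply Finset.sum_congr rfl; intro i hi
        rw [hag i (Finset.mem_range.mp hi)]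
    _ = x - (Tbeta β)^[n] x / β ^ n := telescope hβ hx0 n
    _ ≤ 1 := by
        have h0 := iter_nonneg (β := β) hx0 n
        have : (0:ℝ) < β ^ n := pow_pos hβ0 n
        have : 0 ≤ (Tbeta β)^[n] x / β ^ n := by positivity
        linarith

def shf (u : ℕ → ℕ) : ℕ → ℕ := fun i => u (i+1)
def drop (k : ℕ) (u : ℕ → ℕ) : ℕ → ℕ := fun i => u (k + i)

lemma shift_dExp (x : ℝ) : shf (dExp β x) = dExp β (Tbeta β x) := by
  funext i
  simp [shf, dExp, Function.iterate_succ_apply]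

lemma shift_mem {u : ℕ → ℕ} (hu : u ∈ betaShift β) : shf u ∈ betaShift β := by
  have hcont : Continuous (shf : (ℕ → ℕ) → (ℕ → ℕ)) :=
    continuous_pi fun i => continuous_apply (i+1)
  have hmaps : Set.MapsTo shf {s : ℕ → ℕ | ∃ x : ℝ, 0 ≤ x ∧ x < 1 ∧ s = dExp β x}
      {s : ℕ → ℕ | ∃ x : ℝ, 0 ≤ x ∧ x < 1 ∧ s = dExp β x} := by
    rintro s ⟨x, hx0, hx1, rfl⟩
    exact ⟨Tbeta β x, T_nonneg _, T_lt_one _, shift_dExp x⟩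
  exact hmaps.closure hcont hu

lemma drop_succ (k : ℕ) (u : ℕ → ℕ) : drop (k+1) u = shf (drop k u) := by
  funext i; simp only [drop, shf]; congr 1; omega

lemma drop_zero (u : ℕ → ℕ) : drop 0 u = u := funext fun i => by simp [drop]

lemma drop_mem {u : ℕ → ℕ} (hu : u ∈ betaShift β) : ∀ k, drop k u ∈ betaShift β
  | 0 => by rwa [drop_zero]
  | (k+1) => by rw [drop_succ]; exact shift_mem (drop_mem hu k)

include hβ in
lemma realVal_split {u : ℕ → ℕ} (hb : ∀ i, (u i : ℝ) ≤ β) :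
    realVal β u = (u 0 : ℝ) / β + realVal β (shf u) / β := by
  have hβ0 : (0:ℝ) < β := by linarith
  rw [realVal, Summable.tsum_eq_zero_add (summable_bdd hβ hb)]
  have h2 : realVal β (shf u) = ∑' i : ℕ, ((u (i+1) : ℝ) / β ^ (i+1)) :=
    tsum_congr fun i => rfl
  rw [h2, ← tsum_div_const]
  have h3 : ∑' (b : ℕ), (u (b + 1) : ℝ) / β ^ (b + 1 + 1) =
      ∑' (x : ℕ), (u (x + 1) : ℝ) / β ^ (x + 1) / β := by
    apply tsum_congr
    intro i
    rw [div_div, ← pow_succ]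
  rw [h3]
  norm_num

include hβ in
lemma realVal_drop {u : ℕ → ℕ} (hb : ∀ i, (u i : ℝ) ≤ β) (k : ℕ) :
    realVal β u = ∑ i ∈ Finset.range k, (u i : ℝ) / β ^ (i+1) + realVal β (drop k u) / β ^ k := by
  have hβ0 : (0:ℝ) < β := by linarith
  induction k with
  | zero => simp [drop_zero]
  | succ k ih =>
    have hbd : ∀ i, ((drop k u i : ℝ)) ≤ β := fun i => hb _
    rw [ih, drop_succ, realVal_split hβ hbd, Finset.sum_range_succ]
    have : (drop k u 0 : ℝ) = (u k : ℝ) := by simp [drop]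
    rw [this]
    have h1 : (0:ℝ) < β ^ k := pow_pos hβ0 k
    field_simp
    ring

include hβ in
lemma realVal_nonneg (u : ℕ → ℕ) : 0 ≤ realVal β u := by
  apply tsum_nonneg
  intro i
  have : (0:ℝ) < β := by linarith
  positivity

end CC

section DD
variable {β : ℝ} (hβ : 1 < β) {D : ℕ → ℕ} {r : ℕ → ℝ}
  (h1 : r 0 = 1) (hrec : ∀ n, r (n+1) = β * r n - D n)
  (hpos : ∀ n, 0 < r n) (hle1 : ∀ n, r n ≤ 1)

include hβ h1 hrec hpos hle1

lemma D_le : ∀ n, (D n : ℝ) ≤ β := by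
  intro n
  have e := hrec n
  have := hpos (n+1)
  have := hle1 n
  have hβ0 : (0:ℝ) < β := by linarith
  nlinarith

lemma D_telescope (n : ℕ) :
    ∑ i ∈ Finset.range n, (D i : ℝ) / β ^ (i+1) = 1 - r n / β ^ n := by
  have hβ0 : (0:ℝ) < β := by linarith
  induction n with
  | zero => simp [h1]
  | succ n ih =>
    rw [Finset.sum_range_succ, ih]
    have e := hrec n
    have hbn : (0:ℝ) < β ^ n := pow_pos hβ0 n
    have : (D n : ℝ) = β * r n - r (n+1) := by linarith
    rw [this]
    field_simp
    ring

lemma realVal_D : realVal β D = 1 := by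
  apply realVal_eq_of_partial hβ (summable_bdd hβ (D_le hβ h1 hrec hpos hle1))
  have hten : Tendsto (fun n => 1 - r n / β ^ n) atTop (𝓝 (1 - 0)) :=
    tendsto_const_nhds.sub (tail_tendsto hβ (fun n => (hpos n).le) hle1)
  rw [sub_zero] at hten
  exact hten.congr fun n => (D_telescope hβ h1 hrec hpos hle1 n).symm

lemma parry_D {u : ℕ → ℕ} (hu : u ∈ betaShift β) :
    ∀ n, (∀ i, i < n → u i = D i) → u n ≤ D n := by
  intro n hagree
  by_contra hlt
  push_neg at hlt
  have hβ0 : (0:ℝ) < β := by linarith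
  obtain ⟨x, hx0, hx1, hag⟩ := closure_approx hu (n+1)
  have hbn : (0:ℝ) < β ^ n := pow_pos hβ0 n
  have hbn1 : (0:ℝ) < β ^ (n+1) := pow_pos hβ0 (n+1)
  have e1 : ∑ i ∈ Finset.range (n+1), (dExp β x i : ℝ) / β ^ (i+1) ≤ x := by
    rw [telescope hβ hx0 (n+1)]
    have h0 := iter_nonneg (β := β) hx0 (n+1)
    have : 0 ≤ (Tbeta β)^[n+1] x / β ^ (n+1) := by positivity
    linarith
  have e2 : ∑ i ∈ Finset.range (n+1), (dExp β x i : ℝ) / β ^ (i+1)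
      = ∑ i ∈ Finset.range n, (D i : ℝ) / β ^ (i+1) + (u n : ℝ) / β ^ (n+1) := by
    rw [Finset.sum_range_succ]
    congr 1
    · apply Finset.sum_congr rfl
      intro i hi
      have hi' := Finset.mem_range.mp hi
      rw [← hag i (by omega), hagree i hi']
    · rw [← hag n (by omega)]
  have e3 : (D n : ℝ) + 1 ≤ (u n : ℝ) := by exact_mod_cast hlt
  have e4 : β * r n ≤ (D n : ℝ) + 1 := by
    have := hrec n; have := hle1 (n+1); linarith
  have e5 : r n / β ^ n ≤ ((D n : ℝ) + 1) / β ^ (n+1) := by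
    rw [div_le_div_iff₀ hbn hbn1]
    calc r n * β ^ (n+1) = (β * r n) * β ^ n := by ring
      _ ≤ ((D n : ℝ) + 1) * β ^ n := by nlinarith
  have e6 := D_telescope hβ h1 hrec hpos hle1 n
  have : (1:ℝ) ≤ x := by
    have : ((D n : ℝ) + 1) / β ^ (n+1) ≤ (u n : ℝ) / β ^ (n+1) := by
      gcongr
    nlinarith [this, e5]
  linarith

lemma unique_D {u : ℕ → ℕ} (hu : u ∈ betaShift β) (hval : realVal β u = 1) :
    ∀ n, u n = D n := by
  have hβ0 : (0:ℝ) < β := by linarith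
  have key : ∀ n, (∀ i, i < n → u i = D i) ∧ realVal β (drop n u) = r n := by
    intro n
    induction n with
    | zero =>
      refine ⟨fun i hi => absurd hi (Nat.not_lt_zero i), ?_⟩
      rw [drop_zero, hval, h1]
    | succ n ih =>
      obtain ⟨hagree, hv⟩ := ih
      have hvmem : drop n u ∈ betaShift β := drop_mem hu n
      have hb : ∀ i, ((drop n u) i : ℝ) ≤ β := mem_digit_le hβ hvmem
      have hsplit := realVal_split hβ hb
      rw [hv, ← drop_succ] at hsplit
      set A := realVal β (drop (n+1) u) with hA
      have hA0 : 0 ≤ A := realVal_nonneg hβ _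
      have hA1 : A ≤ 1 := realVal_le_one hβ (drop_mem hu (n+1))
      have hbrn : β * r n = (drop n u 0 : ℝ) + A := by
        field_simp at hsplit
        linarith
      have hDlt : (D n : ℝ) < β * r n := by
        have := hrec n; have := hpos (n+1); linarith
      have hun_le : u n ≤ D n := parry_D hβ h1 hrec hpos hle1 hu n hagree
      have hv0 : drop n u 0 = u n := rfl
      have hun_ge : D n ≤ u n := by
        have : (D n : ℝ) - 1 < (u n : ℝ) := by
          rw [← hv0]; linarith
        have : (D n : ℝ) < (u n : ℝ) + 1 := by linarith
        exact_mod_cast Nat.lt_succ_iff.mp (by exact_mod_cast this)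
      have hun : u n = D n := le_antisymm hun_le hun_ge
      refine ⟨fun i hi => ?_, ?_⟩
      · rcases Nat.lt_succ_iff_lt_or_eq.mp hi with h | h
        · exact hagree i h
        · rw [h]; exact hun
      · rw [hrec n, ← hun, ← hv0]
        linarith
  intro n
  exact ((key (n+1)).1 n (Nat.lt_succ_self n))

end DD

section EE
variable {β : ℝ} (hβ : 1 < β)

include hβ

lemma d0_pos : dExp β 1 0 ≠ 0 := by
  have : (1:ℤ) ≤ ⌊β * (Tbeta β)^[0] 1⌋ := by
    simp only [Function.iterate_zero, id_eq, mul_one]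
    exact Int.le_floor.mpr (by exact_mod_cast hβ.le)
  simp only [dExp, ne_eq]
  omega

omit hβ in
lemma T_zero : Tbeta β 0 = 0 := by simp [Tbeta, Int.fract]

omit hβ in
lemma iter_zero : ∀ j, (Tbeta β)^[j] (0:ℝ) = 0
  | 0 => rfl
  | (j+1) => by rw [Function.iterate_succ_apply, T_zero]; exact iter_zero j

omit hβ in
lemma zero_after {k : ℕ} (hk : (Tbeta β)^[k] 1 = 0) {j : ℕ} (hj : k ≤ j) :
    (Tbeta β)^[j] 1 = 0 := by
  have : j = (j - k) + k := by omega
  rw [this, Function.iterate_add_apply, hk, iter_zero]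

/-- if the digit is zero, T just multiplies by β -/
lemma small_step {k : ℕ} (hd : dExp β 1 k = 0) :
    (Tbeta β)^[k+1] 1 = β * (Tbeta β)^[k] 1 := by
  have h := digit_step hβ (by norm_num : (0:ℝ) ≤ 1) k
  rw [hd] at h
  push_cast at h
  linarith

lemma dExp_zero_of_iter_zero {k : ℕ} (hk : (Tbeta β)^[k] 1 = 0) : dExp β 1 k = 0 := by
  simp [dExp, hk]

/-- Case B: after the last nonzero digit, the orbit of 1 hits 0. -/
lemma TM1_zero {M : ℕ} (hM : ∀ k, M < k → dExp β 1 k = 0) :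
    (Tbeta β)^[M+1] 1 = 0 := by
  have grow : ∀ j, (Tbeta β)^[M+1+j] 1 = β ^ j * (Tbeta β)^[M+1] 1 := by
    intro j
    induction j with
    | zero => simp
    | succ j ih =>
      have : M + 1 + (j + 1) = (M + 1 + j) + 1 := by omega
      rw [this, small_step hβ (hM _ (by omega)), ih]
      ring
  by_contra hne
  have hpos : 0 < (Tbeta β)^[M+1] 1 := lt_of_le_of_ne (iter_nonneg (by norm_num) _) (Ne.symm hne)
  obtain ⟨j, hj⟩ := pow_unbounded_of_one_lt (1 / (Tbeta β)^[M+1] 1) hβ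
  have h2 : 1 < β ^ j * (Tbeta β)^[M+1] 1 := by
    rw [div_lt_iff₀ hpos] at hj
    linarith
  have h3 := iter_le_one (β := β) (by norm_num : (1:ℝ) ≤ 1) (M+1+j)
  rw [grow j] at h3
  linarith

lemma Tpos_of_digit {M : ℕ} (hM : dExp β 1 M ≠ 0) {k : ℕ} (hk : k ≤ M) :
    0 < (Tbeta β)^[k] 1 := by
  rcases lt_or_eq_of_le (iter_nonneg (by norm_num : (0:ℝ) ≤ 1) k) with h | h
  · exact h
  · exact absurd (dExp_zero_of_iter_zero hβ (zero_after h.symm hk)) hM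

lemma dStar_props : ∃ r : ℕ → ℝ, r 0 = 1 ∧ (∀ n, r (n+1) = β * r n - dStar β n) ∧
    (∀ n, 0 < r n) ∧ (∀ n, r n ≤ 1) := by
  by_cases h : ∃ m : ℕ, dExp β 1 m ≠ 0 ∧ ∀ k, m < k → dExp β 1 k = 0
  · -- finite (periodic) case
    set M := Classical.choose h with hMdef
    obtain ⟨hM1, hM2⟩ := Classical.choose_spec h
    have hDeq : dStar β = fun i =>
        if i % (M + 1) = M then dExp β 1 M - 1 else dExp β 1 (i % (M + 1)) := by
      rw [dStar, dif_pos h]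
    set p := M + 1 with hp
    have hTM1 : (Tbeta β)^[p] 1 = 0 := TM1_zero hβ hM2
    have hβTM : β * (Tbeta β)^[M] 1 = (dExp β 1 M : ℝ) := by
      have := digit_step hβ (by norm_num : (0:ℝ) ≤ 1) M
      rw [hTM1] at this
      linarith
    refine ⟨fun n => (Tbeta β)^[n % p] 1, ?_, ?_, ?_, ?_⟩
    · simp
    · intro n
      by_cases hk : n % p = M
      · have h2 : (n + 1) % p = 0 := by
          have h3 := Nat.div_add_mod n p
          have : n + 1 = p * (n / p + 1) := by rw [Nat.mul_add, Nat.mul_one]; omega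
          rw [this, Nat.mul_mod_right]
        show (Tbeta β)^[(n+1) % p] 1 = β * (Tbeta β)^[n % p] 1 - (dStar β n : ℝ)
        rw [h2, hDeq]
        simp only [hk, if_pos]
        have hd1 : 1 ≤ dExp β 1 M := Nat.one_le_iff_ne_zero.mpr hM1
        rw [Nat.cast_sub hd1]
        simp only [Function.iterate_zero, id_eq, Nat.cast_one, hk]
        rw [hβTM]
        ring
      · have hkM : n % p < M := by
          have := Nat.mod_lt n (show 0 < p by omega)
          omega
        have h2 : (n + 1) % p = n % p + 1 := by
          have h3 := Nat.div_add_mod n p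
          have heq : n + 1 = n % p + 1 + p * (n / p) := by omega
          rw [heq, Nat.add_mul_mod_self_left, Nat.mod_eq_of_lt (by omega)]
        show (Tbeta β)^[(n+1) % p] 1 = β * (Tbeta β)^[n % p] 1 - (dStar β n : ℝ)
        rw [h2, hDeq]
        simp only [if_neg hk]
        have := digit_step hβ (by norm_num : (0:ℝ) ≤ 1) (n % p)
        linarith
    · intro n
      exact Tpos_of_digit hβ hM1 (by have := Nat.mod_lt n (show 0 < p by omega); omega)
    · intro n
      exact iter_le_one le_rfl _
  · -- infinite case
    have hDeq : dStar β = dExp β 1 := by rw [dStar, dif_neg h]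
    have hpos : ∀ n, 0 < (Tbeta β)^[n] 1 := by
      intro n
      rcases lt_or_eq_of_le (iter_nonneg (by norm_num : (0:ℝ) ≤ 1) n) with h' | h'
      · exact h'
      · exfalso
        apply h
        classical
        have hzero : ∀ k, n ≤ k → dExp β 1 k = 0 := fun k hk =>
          dExp_zero_of_iter_zero hβ (zero_after h'.symm hk)
        refine ⟨Nat.findGreatest (fun k => dExp β 1 k ≠ 0) n,
          Nat.findGreatest_spec (P := fun k => dExp β 1 k ≠ 0) (Nat.zero_le n) (d0_pos hβ), ?_⟩
        intro k hk
        by_cases hkn : k ≤ n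
        · by_contra hne
          exact (Nat.findGreatest_is_greatest hk hkn) hne
        · exact hzero k (by omega)
    refine ⟨fun n => (Tbeta β)^[n] 1, by simp, ?_, hpos, fun n => iter_le_one le_rfl _⟩
    intro n
    rw [hDeq]
    have := digit_step hβ (by norm_num : (0:ℝ) ≤ 1) n
    linarith

lemma realVal_dStar : realVal β (dStar β) = 1 := by
  obtain ⟨r, h1, hrec, hpos, hle1⟩ := dStar_props hβ
  exact realVal_D hβ h1 hrec hpos hle1

lemma unique_dStar {u : ℕ → ℕ} (hu : u ∈ betaShift β) (hval : realVal β u = 1) :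
    ∀ n, u n = dStar β n := by
  obtain ⟨r, h1, hrec, hpos, hle1⟩ := dStar_props hβ
  exact unique_D hβ h1 hrec hpos hle1 hu hval

lemma dStar_le (n : ℕ) : (dStar β n : ℝ) ≤ β := by
  obtain ⟨r, h1, hrec, hpos, hle1⟩ := dStar_props hβ
  exact D_le hβ h1 hrec hpos hle1 n

end EE

section FF
variable {β : ℝ} (hβ : 1 < β)
include hβ

lemma key_half {s t : ℕ → ℕ} (hs : s ∈ betaShift β) (ht : t ∈ betaShift β) (m : ℕ)
    (hlt : t m < s m)
    (heq : (s m : ℝ) + realVal β (drop (m+1) s) = (t m : ℝ) + realVal β (drop (m+1) t)) :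
    t m + 1 = s m ∧ (∀ i, m < i → s i = 0) ∧ (∀ i, t (m + 1 + i) = dStar β i) := by
  have hβ0 : (0:ℝ) < β := by linarith
  set A := realVal β (drop (m+1) s) with hAdef
  set B := realVal β (drop (m+1) t) with hBdef
  have hA0 : 0 ≤ A := realVal_nonneg hβ _
  have hB1 : B ≤ 1 := realVal_le_one hβ (drop_mem ht (m+1))
  have hA1 : A ≤ 1 := realVal_le_one hβ (drop_mem hs (m+1))
  have hB0 : 0 ≤ B := realVal_nonneg hβ _
  have hge : (t m : ℝ) + 1 ≤ (s m : ℝ) := by exact_mod_cast hlt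
  have h1 : (s m : ℝ) = (t m : ℝ) + 1 := by linarith
  have hsm : t m + 1 = s m := by exact_mod_cast h1.symm
  have hA : A = 0 := by linarith
  have hB : B = 1 := by linarith
  refine ⟨hsm, ?_, fun i => unique_dStar hβ (drop_mem ht (m+1)) hB i⟩
  intro i hi
  have hsum : Summable (fun j => ((drop (m+1) s j : ℝ)) / β ^ (j+1)) :=
    summable_mem hβ (drop_mem hs (m+1))
  have hterm : ((drop (m+1) s (i - (m+1)) : ℝ)) / β ^ ((i - (m+1))+1) ≤ A :=
    Summable.le_tsum hsum _ (fun j _ => by positivity)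
  have hnonneg : (0:ℝ) ≤ ((drop (m+1) s (i-(m+1)) : ℝ)) / β ^ ((i-(m+1))+1) := by positivity
  have hz : ((drop (m+1) s (i-(m+1)) : ℝ)) / β ^ ((i-(m+1))+1) = 0 :=
    le_antisymm (hA ▸ hterm) hnonneg
  have hnum : ((drop (m+1) s (i-(m+1)) : ℝ)) = 0 := by
    rcases div_eq_zero_iff.mp hz with h | h
    · exact h
    · exact absurd h (ne_of_gt (pow_pos hβ0 _))
  have hnat : drop (m+1) s (i - (m+1)) = 0 := by exact_mod_cast hnum
  have he : (m+1) + (i - (m+1)) = i := by omega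
  rwa [drop, he] at hnat

end FF


theorem stmt_16 (β : ℝ) (hβ : 1 < β) :
    (∀ s t : ℕ → ℕ, s ∈ betaShift β → t ∈ betaShift β → s ≠ t →
      realVal β s = realVal β t →
      ∃ m : ℕ, (∀ i, i < m → s i = t i) ∧
        ((t m + 1 = s m ∧ (∀ i, m < i → s i = 0) ∧ (∀ i, t (m + 1 + i) = dStar β i)) ∨
         (s m + 1 = t m ∧ (∀ i, m < i → t i = 0) ∧ (∀ i, s (m + 1 + i) = dStar β i)))) ∧
    (∀ s t : ℕ → ℕ, s ∈ betaShift β → t ∈ betaShift β →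
      (∃ m : ℕ, (∀ i, i < m → s i = t i) ∧ t m + 1 = s m ∧
        (∀ i, m < i → s i = 0) ∧ (∀ i, t (m + 1 + i) = dStar β i)) →
      realVal β s = realVal β t) := by
  have hβ0 : (0:ℝ) < β := by linarith
  constructor
  · intro s t hs ht hne hval
    have hb_s := mem_digit_le hβ hs
    have hb_t := mem_digit_le hβ ht
    have hex : ∃ n, s n ≠ t n := by
      by_contra hc
      push_neg at hc
      exact hne (funext hc)
    classical
    set m := Nat.find hex with hm
    have hdiff : s m ≠ t m := Nat.find_spec hex
    have hagree : ∀ i, i < m → s i = t i := fun i hi =>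
      not_not.mp (Nat.find_min hex hi)
    have hds := realVal_drop hβ hb_s (m+1)
    have hdt := realVal_drop hβ hb_t (m+1)
    have hpre : ∑ i ∈ Finset.range m, (s i : ℝ) / β ^ (i+1)
        = ∑ i ∈ Finset.range m, (t i : ℝ) / β ^ (i+1) := by
      apply Finset.sum_congr rfl
      intro i hi
      rw [hagree i (Finset.mem_range.mp hi)]
    rw [Finset.sum_range_succ] at hds hdt
    have hβm : (0:ℝ) < β ^ (m+1) := pow_pos hβ0 (m+1)
    have heq2 : ((s m : ℝ) + realVal β (drop (m+1) s)) / β ^ (m+1)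
        = ((t m : ℝ) + realVal β (drop (m+1) t)) / β ^ (m+1) := by
      rw [add_div, add_div]
      rw [hds, hdt, hpre] at hval
      linarith
    have heq3 : (s m : ℝ) + realVal β (drop (m+1) s)
        = (t m : ℝ) + realVal β (drop (m+1) t) := by
      have := (div_eq_div_iff (ne_of_gt hβm) (ne_of_gt hβm)).mp heq2
      exact mul_right_cancel₀ (ne_of_gt hβm) this
    refine ⟨m, hagree, ?_⟩
    rcases lt_or_gt_of_ne hdiff with h | h
    · exact Or.inr (key_half hβ ht hs m h heq3.symm)
    · exact Or.inl (key_half hβ hs ht m h heq3)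
  · rintro s t hs ht ⟨m, hagree, h1, hzero, htail⟩
    have hb_s := mem_digit_le hβ hs
    have hb_t := mem_digit_le hβ ht
    have hds := realVal_drop hβ hb_s (m+1)
    have hdt := realVal_drop hβ hb_t (m+1)
    have hdropS : drop (m+1) s = fun _ => 0 :=
      funext fun i => hzero (m+1+i) (by omega)
    have hdropT : drop (m+1) t = dStar β := funext htail
    have hvS : realVal β (drop (m+1) s) = 0 := by
      rw [hdropS]
      simp [realVal]
    have hvT : realVal β (drop (m+1) t) = 1 := by
      rw [hdropT]
      exact realVal_dStar hβ
    rw [hds, hdt, hvS, hvT, Finset.sum_range_succ, Finset.sum_range_succ]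
    have hpre : ∑ i ∈ Finset.range m, (s i : ℝ) / β ^ (i+1)
        = ∑ i ∈ Finset.range m, (t i : ℝ) / β ^ (i+1) := by
      apply Finset.sum_congr rfl
      intro i hi
      rw [hagree i (Finset.mem_range.mp hi)]
    have hsm : (s m : ℝ) = (t m : ℝ) + 1 := by exact_mod_cast h1.symm
    rw [hpre, hsm, add_div]
    ring
end
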